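/- arXiv:2404.08863 — 4 statements merged into one kernel-verified Lean document; each statement's English description precedes it below -/
import Mathlib

section
/- Let G be a residually torsion-free nilpotent group, and let x, y ∈ G be elements such that the homomorphism from the free group F₂ on two generators to G sending the two free generators to x and y respectively is injective (so x and y generate a free subgroup of rank 2). Then there exists an element w of the subgroup generated by x and y with w ≠ 1 such that the cyclic subgroups ⟨x⟩ and ⟨w⟩ have disjoint conjugates in G. -/
/-!
Take `w = ⁅x, y⁆`, which is nontrivial because `x` and `y` generate a free group.

In a torsion-free nilpotent group `N` the upper central factors are torsion-free. Indeed, if `x`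
commutes with `⁅x, y⁆` then `xⁿ y x⁻ⁿ = ⁅x, y⁆ⁿ y`, so `xⁿ` commuting with `y` makes `⁅x, y⁆`
a torsion element, hence trivial; climbing the upper central series, `xⁿ` central forces `x`
central, and passing to `N ⧸ Z(N)` handles the higher factors. Now if `g xⁿ g⁻¹ ∈ ⟨⁅x, y⁆⟩` and
`x ∈ Z_{i+1}(N)`, then `⁅x, y⁆ ∈ Z_i(N)`, so `xⁿ ∈ Z_i(N)` and therefore `x ∈ Z_i(N)`; descending
to `Z_0(N) = 1` gives `xⁿ = 1`. Residual torsion-free nilpotence carries this over to `G`.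
-/

open scoped commutatorElement

/-- Two subgroups `H₀` and `H₁` of a group `G` have *disjoint conjugates* if
`g H₀ g⁻¹ ∩ H₁ = {1}` for every `g ∈ G`. -/
def DisjointConjugates {G : Type*} [Group G] (H₀ H₁ : Subgroup G) : Prop :=
  ∀ g : G, ∀ h ∈ H₀, g * h * g⁻¹ ∈ H₁ → h = 1

/-- A group `G` is residually torsion-free nilpotent if every nontrivial element
survives in some torsion-free nilpotent quotient. -/
def ResiduallyTorsionFreeNilpotent (G : Type*) [Group G] : Prop :=
  ∀ g : G, g ≠ 1 → ∃ (N : Type) (_ : Group N) (f : G →* N),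
    Group.IsNilpotent N ∧ (∀ g : N, g ≠ 1 → ¬IsOfFinOrder g) ∧ f g ≠ 1

theorem Commute.conj_pow_eq_commutatorElement_pow_mul {G : Type*} [Group G] {x y : G}
    (h : Commute x ⁅x, y⁆) (n : ℕ) : x ^ n * y * (x ^ n)⁻¹ = ⁅x, y⁆ ^ n * y := by
  induction n with
  | zero => simp
  | succ n ih =>
    calc x ^ (n + 1) * y * (x ^ (n + 1))⁻¹ = x * (x ^ n * y * (x ^ n)⁻¹) * x⁻¹ := by group
      _ = ⁅x, y⁆ ^ n * (x * y * x⁻¹) := by rw [ih, ← mul_assoc, (h.pow_right n).eq]; group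
      _ = ⁅x, y⁆ ^ (n + 1) * y := by rw [commutatorElement_def, pow_succ]; group

theorem Commute.commutatorElement_zpow_eq_one {G : Type*} [Group G] {x y : G}
    (h : Commute x ⁅x, y⁆) {n : ℤ} (hn : Commute (x ^ n) y) : ⁅x, y⁆ ^ n = 1 := by
  have key (m : ℕ) (hm : Commute (x ^ m) y) : ⁅x, y⁆ ^ m = 1 := by
    simpa [hm.eq] using (h.conj_pow_eq_commutatorElement_pow_mul m).symm
  obtain ⟨m, rfl | rfl⟩ := Int.eq_nat_or_neg n <;> simpa using key m (by simpa using hn)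

namespace Subgroup

variable {N : Type*} [Group N] [Group.IsNilpotent N]

theorem mem_center_of_zpow_mem_center (htf : ∀ g : N, g ≠ 1 → ¬IsOfFinOrder g) {x : N} {n : ℤ}
    (hn : n ≠ 0) (hx : x ^ n ∈ center N) : x ∈ center N := by
  have h_upper (i : ℕ) : ∀ y ∈ upperCentralSeries N i, Commute x y := by
    induction i with
    | zero => simp [upperCentralSeries_zero]
    | succ i ih =>
      intro y hy
      have hxy : Commute x ⁅x, y⁆ := by
        rw [← commutatorElement_inv]
        exact ih _ (inv_mem (mem_upperCentralSeries_succ_iff.mp hy x))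
      have hc : ⁅x, y⁆ ^ n = 1 :=
        hxy.commutatorElement_zpow_eq_one (mem_center_iff.mp hx y).symm
      have : ⁅x, y⁆ = 1 :=
        not_not.mp fun hne => htf _ hne (isOfFinOrder_iff_zpow_eq_one.mpr ⟨n, hn, hc⟩)
      exact commutatorElement_eq_one_iff_commute.mp this
  obtain ⟨c, hc⟩ := Group.IsNilpotent.nilpotent N
  exact mem_center_iff.mpr fun y => (h_upper c y (hc ▸ mem_top y)).eq.symm

theorem not_isOfFinOrder_quotient_center (htf : ∀ g : N, g ≠ 1 → ¬IsOfFinOrder g) :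
    ∀ q : N ⧸ center N, q ≠ 1 → ¬IsOfFinOrder q := by
  intro q hq hfin
  obtain ⟨g, rfl⟩ := QuotientGroup.mk_surjective q
  obtain ⟨n, hn, hgn⟩ := isOfFinOrder_iff_zpow_eq_one.mp hfin
  rw [← QuotientGroup.mk_zpow, QuotientGroup.eq_one_iff] at hgn
  exact hq ((QuotientGroup.eq_one_iff g).mpr (mem_center_of_zpow_mem_center htf hn hgn))

theorem mem_upperCentralSeries_of_zpow_mem (htf : ∀ g : N, g ≠ 1 → ¬IsOfFinOrder g) {x : N}
    {n : ℤ} (hn : n ≠ 0) {i : ℕ} (hx : x ^ n ∈ upperCentralSeries N i) :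
    x ∈ upperCentralSeries N i := by
  induction i generalizing N with
  | zero =>
    rw [upperCentralSeries_zero, mem_bot] at hx ⊢
    exact not_not.mp fun hne => htf x hne (isOfFinOrder_iff_zpow_eq_one.mpr ⟨n, hn, hx⟩)
  | succ i ih =>
    rw [← comap_upperCentralSeries_quotient_center, mem_comap, map_zpow] at hx
    rw [← comap_upperCentralSeries_quotient_center, mem_comap]
    exact ih (not_isOfFinOrder_quotient_center htf) hx

end Subgroup

theorem disjointConjugates_zpowers_commutatorElement {N : Type*} [Group N]
    [Group.IsNilpotent N] (htf : ∀ g : N, g ≠ 1 → ¬IsOfFinOrder g) (x y : N) :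
    DisjointConjugates (Subgroup.zpowers x) (Subgroup.zpowers ⁅x, y⁆) := by
  rintro g _ ⟨n, rfl⟩ ⟨m, hm⟩
  obtain rfl | hn := eq_or_ne n 0
  · exact zpow_zero x
  suffices h_descend : ∀ i, x ∈ Subgroup.upperCentralSeries N i → x = 1 by
    obtain ⟨c, hc⟩ := Group.IsNilpotent.nilpotent N
    simp [h_descend c (hc ▸ Subgroup.mem_top x)]
  intro i
  induction i with
  | zero => exact Subgroup.mem_bot.mp
  | succ i ih =>
    intro hx
    have hxy : ⁅x, y⁆ ∈ Subgroup.upperCentralSeries N i :=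
      Subgroup.mem_upperCentralSeries_succ_iff.mp hx y
    have hconj : g * x ^ n * g⁻¹ ∈ Subgroup.upperCentralSeries N i := hm ▸ zpow_mem hxy m
    have hxn : x ^ n ∈ Subgroup.upperCentralSeries N i := by
      simpa [mul_assoc] using Subgroup.Normal.conj_mem inferInstance _ hconj g⁻¹
    exact ih (Subgroup.mem_upperCentralSeries_of_zpow_mem htf hn hxn)

theorem DisjointConjugates.map_eq_one {G N : Type*} [Group G] [Group N] {f : G →* N}
    {H₀ H₁ : Subgroup G} (hd : DisjointConjugates (H₀.map f) (H₁.map f)) {g h : G}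
    (hh : h ∈ H₀) (hgh : g * h * g⁻¹ ∈ H₁) : f h = 1 :=
  hd (f g) (f h) (Subgroup.mem_map_of_mem f hh) (by simpa using Subgroup.mem_map_of_mem f hgh)

theorem stmt6 {G : Type*} [Group G] (hG : ResiduallyTorsionFreeNilpotent G)
    (x y : G)
    (hxy : Function.Injective (FreeGroup.lift (![x, y] : Fin 2 → G))) :
    ∃ w ∈ Subgroup.closure ({x, y} : Set G), w ≠ 1 ∧
      DisjointConjugates (Subgroup.zpowers x) (Subgroup.zpowers w) := by
  have hw : FreeGroup.lift ![x, y] ⁅FreeGroup.of (0 : Fin 2), FreeGroup.of 1⁆ = ⁅x, y⁆ := by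
    simp
  refine ⟨⁅x, y⁆, ?_, ?_, ?_⟩
  · rw [← hw, ← Matrix.range_cons_cons_empty x y ![], ← FreeGroup.range_lift_eq_closure]
    exact ⟨_, rfl⟩
  · rw [← hw, ← map_one (FreeGroup.lift ![x, y])]
    exact hxy.ne (by decide)
  · intro g h hh hgh
    by_contra hne
    obtain ⟨N, _, f, hnil, htf, hfh⟩ := hG h hne
    have hd := disjointConjugates_zpowers_commutatorElement htf (f x) (f y)
    rw [← map_commutatorElement, ← MonoidHom.map_zpowers, ← MonoidHom.map_zpowers] at hd
    exact hfh (hd.map_eq_one hh hgh)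
end

section
/- Let L be a simple graph with vertex set V, let S ⊆ V, and let L[S] denote the induced subgraph of L on S (the full subgraph: two vertices of S are adjacent in L[S] if and only if they are adjacent in L). Then the group homomorphism ι : A_{L[S]} → A_L sending the generator corresponding to each s ∈ S to the generator s of A_L is injective. -/
/-!
The inclusion `ι` has a left inverse: the retraction `A_L → A_{L[S]}` fixing the generators in `S`
and killing those outside `S`. It is well defined because every relator of `A_L` is sent either to
a relator of `A_{L[S]}` (both endpoints in `S`, which are adjacent in `L[S]` as the subgraph is
induced) or to a commutator involving `1`.
-/

/-- The commutator relators of the right-angled Artin group of a simple graph `L`: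
for each edge `{v, w}` of `L`, the commutator `v * w * v⁻¹ * w⁻¹`. -/
def raagRels {V : Type*} (L : SimpleGraph V) : Set (FreeGroup V) :=
  {r | ∃ v w : V, L.Adj v w ∧
    r = FreeGroup.of v * FreeGroup.of w * (FreeGroup.of v)⁻¹ * (FreeGroup.of w)⁻¹}

/-- The right-angled Artin group associated to a simple graph `L`. -/
abbrev RAAG {V : Type*} (L : SimpleGraph V) : Type _ := PresentedGroup (raagRels L)

namespace RAAG

variable {V : Type*} {L : SimpleGraph V}

theorem commute_of_of_adj {v w : V} (h : L.Adj v w) :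
    Commute (PresentedGroup.of v : RAAG L) (PresentedGroup.of w) := by
  have hrel : (PresentedGroup.of v : RAAG L) * PresentedGroup.of w *
      (PresentedGroup.of v)⁻¹ * (PresentedGroup.of w)⁻¹ = 1 :=
    (QuotientGroup.eq_one_iff _).mpr (Subgroup.subset_normalClosure ⟨v, w, h, rfl⟩)
  rwa [mul_inv_eq_one, mul_inv_eq_iff_eq_mul] at hrel

def lift {G : Type*} [Group G] (f : V → G) (hf : ∀ v w, L.Adj v w → Commute (f v) (f w)) :
    RAAG L →* G :=
  PresentedGroup.toGroup (rels := raagRels L) (f := f) <| by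
    rintro _ ⟨v, w, h, rfl⟩
    simp [(hf v w h).eq]

@[simp]
theorem lift_of {G : Type*} [Group G] (f : V → G) (hf : ∀ v w, L.Adj v w → Commute (f v) (f w))
    (v : V) : lift f hf (PresentedGroup.of v) = f v :=
  PresentedGroup.toGroup.of _

open Classical in
noncomputable def retraction (S : Set V) : RAAG L →* RAAG (L.induce S) :=
  lift (fun v => if h : v ∈ S then PresentedGroup.of ⟨v, h⟩ else 1) fun v w hvw => by
    by_cases hv : v ∈ S
    · by_cases hw : w ∈ S
      · simpa [hv, hw] using commute_of_of_adj (L := L.induce S) (v := ⟨v, hv⟩) (w := ⟨w, hw⟩) hvw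
      · simp [hw]
    · simp [hv]

@[simp]
theorem retraction_of_coe {S : Set V} (s : S) :
    retraction S (PresentedGroup.of (s : V) : RAAG L) = PresentedGroup.of s := by
  simp [retraction]

end RAAG

theorem stmt9 {V : Type*} (L : SimpleGraph V) (S : Set V)
    (ι : RAAG (L.induce S) →* RAAG L)
    (hι : ∀ s : S, ι (PresentedGroup.of s) = PresentedGroup.of (s : V)) :
    Function.Injective ι := by
  have hleft : (RAAG.retraction S).comp ι = MonoidHom.id _ :=
    PresentedGroup.ext fun s => by simp [hι]
  exact Function.LeftInverse.injective (DFunLike.congr_fun hleft)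
end

section
/- Let k ≥ 3 and let F be the free group on free generators a₀, a₁, …, a_{k-1}. For each i with 2 ≤ i ≤ k-1 define gᵢ = a₀⁻¹ aᵢ a₁⁻¹ a₀ aᵢ⁻¹ a₁. Then the elements g₂, …, g_{k-1} freely generate a free subgroup of F of rank k-2; that is, the unique homomorphism from the free group on k-2 generators to F sending the j-th free generator to g_{j+2} is injective. -/
/-!
Let `F` act on itself by left multiplication, and let `X i` (resp. `Y i`) be the set of elements
whose reduced word begins with `a₀⁻¹ aᵢ` (resp. `a₁⁻¹ aᵢ`). When `w ∉ Y i`, at most the final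
letter `a₁` of `gᵢ` cancels in `gᵢ w`, so `gᵢ w ∈ X i`; symmetrically `gᵢ⁻¹`, which is `gᵢ` with
`a₀` and `a₁` exchanged, maps the complement of `X i` into `Y i`. These sets are pairwise disjoint,
so the ping-pong lemma applies when there are at least two generators. For `k = 3` there is a
single generator, and injectivity just says that `g₂ ≠ 1` has infinite order in the torsion-free
group `F`.
-/

/-- The element `gᵢ = a₀⁻¹ aᵢ a₁⁻¹ a₀ aᵢ⁻¹ a₁` of the free group on `k` generators
`a₀, …, a_{k-1}` (where `a_i = FreeGroup.of i`). -/
def starWord (k : ℕ) (hk : 3 ≤ k) (i : Fin k) : FreeGroup (Fin k) :=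
  (FreeGroup.of (⟨0, by omega⟩ : Fin k))⁻¹ * FreeGroup.of i *
    (FreeGroup.of (⟨1, by omega⟩ : Fin k))⁻¹ * FreeGroup.of (⟨0, by omega⟩ : Fin k) *
    (FreeGroup.of i)⁻¹ * FreeGroup.of (⟨1, by omega⟩ : Fin k)

universe u

namespace FreeGroup

theorem injective_lift_of_subsingleton {ι G : Type*} [Subsingleton ι] [Group G]
    [IsMulTorsionFree G] {a : ι → G} (ha : ∀ i, a i ≠ 1) : Function.Injective (lift a) := by
  rw [injective_iff_map_eq_one]
  intro x hx
  cases isEmpty_or_nonempty ι with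
  | inl _ => exact Subsingleton.elim x 1
  | inr hι =>
    have : Unique ι := uniqueOfSubsingleton hι.some
    obtain ⟨n, rfl⟩ : ∃ n : ℤ, x = of default ^ n :=
      ⟨equivIntOfUnique x, (equivIntOfUnique.symm_apply_apply x).symm⟩
    rw [map_zpow, lift_apply_of, IsMulTorsionFree.zpow_eq_one_iff_right (ha _)] at hx
    rw [hx, zpow_zero]

variable {α : Type u}

theorem isReduced_append {L₁ L₂ : List (α × Bool)} :
    IsReduced (L₁ ++ L₂) ↔ IsReduced L₁ ∧ IsReduced L₂ ∧
      ∀ x ∈ L₁.getLast?, ∀ y ∈ L₂.head?, x.1 = y.1 → x.2 = y.2 :=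
  List.isChain_append

def starGenWord (b c i : α) : List (α × Bool) :=
  [(b, false), (i, true), (c, false), (b, true), (i, false), (c, true)]

theorem inv_mk_starGenWord (b c i : α) :
    (mk (starGenWord b c i))⁻¹ = mk (starGenWord c b i) := by
  simp [starGenWord, inv_mk, invRev]

variable [DecidableEq α]

def startsWithInvMul (x y : α) : Set (FreeGroup α) :=
  {w | ∃ L, w.toWord = (x, false) :: (y, true) :: L}

theorem mem_startsWithInvMul {x y : α} {w : FreeGroup α} :
    w ∈ startsWithInvMul x y ↔ ∃ L, w.toWord = (x, false) :: (y, true) :: L :=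
  Iff.rfl

theorem one_notMem_startsWithInvMul (x y : α) : (1 : FreeGroup α) ∉ startsWithInvMul x y := by
  simp [startsWithInvMul]

theorem disjoint_startsWithInvMul {x y x' y' : α} (h : x ≠ x' ∨ y ≠ y') :
    Disjoint (startsWithInvMul x y) (startsWithInvMul x' y') := by
  rw [Set.disjoint_left]
  rintro w ⟨L, hL⟩ ⟨L', hL'⟩
  rw [hL] at hL'
  simp_all

theorem mk_starGenWord_mul_mem {b c i : α} (hbc : b ≠ c) (hib : i ≠ b) (hic : i ≠ c)
    {w : FreeGroup α} (hw : w ∉ startsWithInvMul c i) :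
    mk (starGenWord b c i) * w ∈ startsWithInvMul b i := by
  have hred : IsReduced w.toWord := isReduced_toWord
  have hpre : IsReduced [(b, false), (i, true), (c, false), (b, true), (i, false)] := by
    simp [hbc.symm, hib.symm, hic]
  simp only [mem_startsWithInvMul, not_exists] at hw ⊢
  rw [← mk_toWord (x := w), mul_mk, toWord_mk]
  by_cases hc : ∃ M, w.toWord = (c, false) :: M
  · obtain ⟨M, hM⟩ := hc
    rw [hM] at hred hw
    have hstep : Red.Step (starGenWord b c i ++ (c, false) :: M)
        ([(b, false), (i, true), (c, false), (b, true), (i, false)] ++ M) :=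
      Red.Step.not (L₁ := [(b, false), (i, true), (c, false), (b, true), (i, false)])
    rw [hM, reduce.Step.eq hstep, IsReduced.reduce_eq]
    · exact ⟨_, rfl⟩
    refine isReduced_append.2 ⟨hpre, hred.infix ⟨[(c, false)], [], by simp⟩, ?_⟩
    rintro _ ⟨⟩ ⟨y, t⟩ hy (rfl : i = y)
    obtain ⟨N, rfl⟩ : ∃ N, M = (i, t) :: N := ⟨_, List.eq_cons_of_mem_head? hy⟩
    cases t
    · rfl
    · exact absurd rfl (hw N)
  · rw [IsReduced.reduce_eq]
    · exact ⟨_, rfl⟩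
    refine isReduced_append.2 ⟨by simp [starGenWord, hbc.symm, hib.symm, hic], hred, ?_⟩
    rintro _ ⟨⟩ ⟨y, t⟩ hy (rfl : c = y)
    cases t
    · exact absurd ⟨_, List.eq_cons_of_mem_head? hy⟩ hc
    · rfl

theorem mk_starGenWord_ne_one {b c i : α} (hbc : b ≠ c) (hib : i ≠ b) (hic : i ≠ c) :
    mk (starGenWord b c i) ≠ 1 := fun h =>
  one_notMem_startsWithInvMul b i <| by
    simpa [h] using mk_starGenWord_mul_mem hbc hib hic (one_notMem_startsWithInvMul c i)

-- `ι` and `α` share a universe because `injective_lift_of_ping_pong` requires it.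
theorem injective_lift_mk_starGenWord {ι : Type u} {b c : α} {f : ι → α}
    (hf : Function.Injective f) (hbc : b ≠ c) (hb : ∀ j, f j ≠ b) (hc : ∀ j, f j ≠ c) :
    Function.Injective (lift fun j => mk (starGenWord b c (f j))) := by
  rcases subsingleton_or_nontrivial ι with _ | _
  · exact injective_lift_of_subsingleton fun j => mk_starGenWord_ne_one hbc (hb j) (hc j)
  have ping : ∀ j, ∀ w ∉ startsWithInvMul c (f j),
      mk (starGenWord b c (f j)) * w ∈ startsWithInvMul b (f j) :=
    fun j _ => mk_starGenWord_mul_mem hbc (hb j) (hc j)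
  have pong : ∀ j, ∀ w ∉ startsWithInvMul b (f j),
      (mk (starGenWord b c (f j)))⁻¹ * w ∈ startsWithInvMul c (f j) := fun j _ hw => by
    rw [inv_mk_starGenWord]
    exact mk_starGenWord_mul_mem hbc.symm (hc j) (hb j) hw
  refine injective_lift_of_ping_pong _ (fun j => startsWithInvMul b (f j))
    (fun j => startsWithInvMul c (f j))
    (fun j => ⟨_, ping j 1 (one_notMem_startsWithInvMul c (f j))⟩)
    (fun _ _ h => disjoint_startsWithInvMul (.inr (hf.ne h)))
    (fun _ _ h => disjoint_startsWithInvMul (.inr (hf.ne h)))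
    (fun _ _ => disjoint_startsWithInvMul (.inl hbc)) ?_ ?_
  · rintro j _ ⟨w, hw, rfl⟩
    exact ping j w hw
  · rintro j _ ⟨w, hw, rfl⟩
    exact pong j w hw

end FreeGroup

theorem starWord_eq_mk_starGenWord (k : ℕ) (hk : 3 ≤ k) (i : Fin k) :
    starWord k hk i = FreeGroup.mk (FreeGroup.starGenWord ⟨0, by omega⟩ ⟨1, by omega⟩ i) :=
  rfl

theorem stmt11 (k : ℕ) (hk : 3 ≤ k) :
    Function.Injective (FreeGroup.lift (fun j : Fin (k - 2) =>
      starWord k hk ⟨(j : ℕ) + 2, by have := j.isLt; omega⟩)) := by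
  simp only [starWord_eq_mk_starGenWord]
  exact FreeGroup.injective_lift_mk_starGenWord
    (fun j j' h => Fin.ext (by simpa [Fin.ext_iff] using h)) (by simp [Fin.ext_iff])
    (fun j => by simp [Fin.ext_iff]) (fun j => by simp [Fin.ext_iff])
end

section
/- Let k ≥ 4 and let F be the free group on free generators a₀, a₁, …, a_{k-1}. For each i with 2 ≤ i ≤ k-1 define gᵢ = a₀⁻¹ aᵢ a₁⁻¹ a₀ aᵢ⁻¹ a₁. Then for all i, j with 2 ≤ i < j ≤ k-1, the cyclic subgroups ⟨gᵢ⟩ and ⟨gⱼ⟩ generated by gᵢ and gⱼ have disjoint conjugates in F. -/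
section

variable {G K : Type*} [Group G] [Group K]

theorem DisjointConjugates.of_le_ker {H₀ H₁ : Subgroup G} (φ : G →* K)
    (h₀ : Disjoint H₀ φ.ker) (h₁ : H₁ ≤ φ.ker) : DisjointConjugates H₀ H₁ := by
  intro g h hh hc
  have hker : h ∈ φ.ker := by simpa using h₁ hc
  exact Subgroup.disjoint_def.mp h₀ hh hker

theorem disjoint_zpowers_ker_of_not_isOfFinOrder {x : G} (φ : G →* K) (hx : ¬IsOfFinOrder (φ x)) :
    Disjoint (Subgroup.zpowers x) φ.ker := by
  rw [Subgroup.disjoint_def]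
  rintro _ ⟨m, rfl⟩ hm
  have hm0 : m = 0 :=
    injective_zpow_iff_not_isOfFinOrder.mpr hx (by simpa using hm : (φ x) ^ m = (φ x) ^ (0 : ℤ))
  simp [hm0]

theorem DisjointConjugates.zpowers_of_map {x y : G} (φ : G →* K)
    (hx : ¬IsOfFinOrder (φ x)) (hy : φ y = 1) :
    DisjointConjugates (Subgroup.zpowers x) (Subgroup.zpowers y) :=
  .of_le_ker φ (disjoint_zpowers_ker_of_not_isOfFinOrder φ hx) (Subgroup.zpowers_le.mpr hy)

end

namespace DihedralGroup

theorem not_isOfFinOrder_r_two : ¬IsOfFinOrder (r 2 : DihedralGroup 0) := by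
  rw [← Nat.cast_ofNat (R := ZMod 0) (n := 2), ← r_one_pow, isOfFinOrder_pow,
    ← orderOf_pos_iff, orderOf_r_one]
  simp

end DihedralGroup

theorem stmt13 (k : ℕ) (i j : Fin k)
    (hi : 2 ≤ (i : ℕ)) (hij : (i : ℕ) < (j : ℕ)) :
    DisjointConjugates (Subgroup.zpowers (starWord k (by omega) i))
      (Subgroup.zpowers (starWord k (by omega) j)) := by
  have hi0 : 0 ≠ (i : ℕ) := by omega
  have hi1 : (i : ℕ) ≠ 1 := by omega
  have hj1 : (j : ℕ) ≠ 1 := by omega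
  have hji : (j : ℕ) ≠ i := by omega
  let ψ : FreeGroup (Fin k) →* DihedralGroup 0 := FreeGroup.lift fun x =>
    if (x : ℕ) = 1 then DihedralGroup.sr 0 else if x = i then DihedralGroup.r 1 else 1
  refine .zpowers_of_map ψ ?_ ?_
  · have hψi : ψ (starWord k (by omega) i) = DihedralGroup.r 2 := by
      simp [ψ, starWord, Fin.ext_iff, hi0, hi1, one_add_one_eq_two]
    exact hψi ▸ DihedralGroup.not_isOfFinOrder_r_two
  · simp [ψ, starWord, Fin.ext_iff, hi0, hj1, hji]
end
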